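/- arXiv:2005.07360 — 3 statements merged into one kernel-verified Lean document; each statement's English description precedes it below -/
import Mathlib

section
/- Let S ⊂ [d], S̄ = [d]∖S, 0 < α < 1, p > 0, with γᵢ/γ_k ≥ 1+p for all i ∈ S̄ (where γ_k = max_{j∈S} γⱼ). Suppose T ≥ (1/(4γ_k)) log(|S|γ_{j*}δ_{j*}(0)²/ε) with ε ≤ |S|γ_{j*}δ_{j*}(0)², and ε^p Σ_{i∈S̄} γᵢδᵢ(0)²/(|S|γ_{j*}δ_{j*}(0)²)^{1+p} ≤ α. Then Σ_{i∈S̄} γᵢ δᵢ(T)² ≤ αε, where δᵢ(T) = δᵢ(0)e^{-2γᵢT}. -/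
open Real Finset

/-!
Every coordinate outside `S` decays at rate `4γᵢ ≥ (1 + p) · 4γ_k`, and by the choice of `T`
the slowest rate `4γ_k` has already brought `exp (-4γ_k T)` below `ε / M`, where
`M = |S| γ_{j*} δ_{j*}(0)²`. Hence each such coordinate is damped by `(ε / M)^(1+p)`, and
condition 2 says precisely that `(ε / M)^(1+p) Σ_{i ∈ S̄} γᵢ δᵢ(0)² ≤ α ε`.
-/

lemma exp_neg_mul_le_div_of_log_div_le {c T M ε : ℝ} (hc : 0 < c) (hε : 0 < ε) (hM : 0 < M)
    (hT : 1 / c * log (M / ε) ≤ T) : exp (-(c * T)) ≤ ε / M := by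
  have hlog : log (M / ε) ≤ c * T := by
    rwa [one_div_mul_eq_div, div_le_iff₀' hc] at hT
  rw [exp_neg, inv_le_comm₀ (exp_pos _) (div_pos hε hM), inv_div]
  exact (log_le_iff_le_exp (div_pos hM hε)).1 hlog

lemma exp_neg_mul_le_rpow_of_mul_le {a b c T : ℝ} (hT : 0 ≤ T) (h : a * b ≤ c) :
    exp (-(c * T)) ≤ exp (-(b * T)) ^ a := by
  rw [← exp_mul, exp_le_exp]
  nlinarith [mul_le_mul_of_nonneg_right h hT]

lemma div_rpow_one_add_mul {ε M p : ℝ} (hε : 0 < ε) (hM : 0 ≤ M) (s : ℝ) :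
    (ε / M) ^ (1 + p) * s = ε * (ε ^ p * (s / M ^ (1 + p))) := by
  rw [div_rpow hε.le hM, rpow_add hε, rpow_one]
  ring

theorem large_coords_contribution_small_general {d : ℕ} (γ δ0 : Fin d → ℝ)
    (hγ : ∀ i, 0 < γ i) (S : Finset (Fin d)) (hS : S.Nonempty)
    (α p : ℝ) (hp : 0 < p)
    (hgap : ∀ i ∈ Sᶜ, γ i / S.sup' hS γ ≥ 1 + p)
    (jstar : Fin d)
    (ε T : ℝ) (hε : 0 < ε)
    (hεle : ε ≤ S.card * (γ jstar * (δ0 jstar)^2))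
    (hT : T ≥ (1 / (4 * S.sup' hS γ)) *
      Real.log (S.card * (γ jstar * (δ0 jstar)^2) / ε))
    (hcond2 : ε ^ p * ∑ i ∈ Sᶜ,
        γ i * (δ0 i)^2 / (S.card * (γ jstar * (δ0 jstar)^2)) ^ (1 + p) ≤ α) :
    (∑ i ∈ Sᶜ, γ i * (δ0 i)^2 * Real.exp (-4 * γ i * T)) ≤ α * ε := by
  set γk := S.sup' hS γ
  set M : ℝ := S.card * (γ jstar * (δ0 jstar)^2)
  have hM : 0 < M := hε.trans_le hεle
  have hγk : 0 < γk := (hγ _).trans_le (le_sup' γ hS.choose_spec)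
  have hT0 : 0 ≤ T := le_trans (mul_nonneg (by positivity)
    (log_nonneg ((one_le_div hε).2 hεle))) hT
  have hslowest : exp (-(4 * γk * T)) ≤ ε / M :=
    exp_neg_mul_le_div_of_log_div_le (by positivity) hε hM (by rwa [ge_iff_le] at hT)
  have hdamped : ∀ i ∈ Sᶜ, exp (-4 * γ i * T) ≤ (ε / M) ^ (1 + p) := by
    intro i hi
    have hrate : (1 + p) * (4 * γk) ≤ 4 * γ i := by
      have := (le_div_iff₀ hγk).1 (hgap i hi)
      linarith
    rw [neg_mul, neg_mul]
    exact (exp_neg_mul_le_rpow_of_mul_le hT0 hrate).trans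
      (rpow_le_rpow (exp_nonneg _) hslowest (by linarith))
  calc ∑ i ∈ Sᶜ, γ i * δ0 i ^ 2 * exp (-4 * γ i * T)
      ≤ ∑ i ∈ Sᶜ, γ i * δ0 i ^ 2 * (ε / M) ^ (1 + p) :=
        sum_le_sum fun i hi => mul_le_mul_of_nonneg_left (hdamped i hi)
          (mul_nonneg (hγ i).le (sq_nonneg _))
    _ = ε * (ε ^ p * ∑ i ∈ Sᶜ, γ i * δ0 i ^ 2 / M ^ (1 + p)) := by
        rw [← sum_mul, mul_comm, div_rpow_one_add_mul hε hM.le, sum_div]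
    _ ≤ ε * α := mul_le_mul_of_nonneg_left hcond2 hε.le
    _ = α * ε := mul_comm ε α

/-- under the eigenvalue gap and condition 2, the contribution of
the large-eigenvalue coordinates S̄ to the train loss at time T is at most αε. -/
theorem large_coords_contribution_small {d : ℕ} (γ δ0 : Fin d → ℝ)
    (hγ : ∀ i, 0 < γ i) (S : Finset (Fin d)) (hS : S.Nonempty)
    (α p : ℝ) (hα0 : 0 < α) (hα1 : α < 1) (hp : 0 < p)
    (hgap : ∀ i ∈ Sᶜ, γ i / S.sup' hS γ ≥ 1 + p)
    (jstar : Fin d) (hjS : jstar ∈ S)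
    (hjmin : ∀ j ∈ S, γ jstar * (δ0 jstar)^2 ≤ γ j * (δ0 j)^2)
    (hjpos : 0 < γ jstar * (δ0 jstar)^2)
    (ε T : ℝ) (hε : 0 < ε)
    (hεle : ε ≤ S.card * (γ jstar * (δ0 jstar)^2))
    (hT : T ≥ (1 / (4 * S.sup' hS γ)) *
      Real.log (S.card * (γ jstar * (δ0 jstar)^2) / ε))
    (hcond2 : ε ^ p * ∑ i ∈ Sᶜ,
        γ i * (δ0 i)^2 / (S.card * (γ jstar * (δ0 jstar)^2)) ^ (1 + p) ≤ α) :
    (∑ i ∈ Sᶜ, γ i * (δ0 i)^2 * Real.exp (-4 * γ i * T)) ≤ α * ε :=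
  large_coords_contribution_small_general γ δ0 hγ S hS α p hp hgap jstar ε T hε hεle hT hcond2
end

section
/- After K steps of gradient descent with η = 1/γ₁ followed by gradient flow stopped when the train loss equals ε, the population loss satisfies L(δ(T)) ≤ ε · max_{k: γ_k = γ₁}(λ_k/γ_k) + C·c^K for some constant C depending only on λ, δ(0), where c = max_{j: γⱼ≠γ₁}|1-2γⱼ/γ₁|² < 1. -/
/-!
Coordinates outside the top eigenspace of the train Hessian are damped by `|1 - 2γⱼ/γ₁|` at
every gradient step and never grow under gradient flow, so after `K` steps each carries at most
`c^K` times its initial square. On the top eigenspace the population weight `λₖ` is at most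
`max (λₖ/γₖ)` times the train weight `γₖ`, and those train-loss terms sum to at most `ε`.
-/

open Finset

theorem Finset.sum_mul_le_sup'_div_mul_sum {ι : Type*} {γ lam y : ι → ℝ} (s : Finset ι)
    (hs : s.Nonempty) (hγ : ∀ i ∈ s, 0 < γ i) (hy : ∀ i ∈ s, 0 ≤ y i) :
    ∑ i ∈ s, lam i * y i ≤ s.sup' hs (fun i => lam i / γ i) * ∑ i ∈ s, γ i * y i := by
  rw [mul_sum]
  refine sum_le_sum fun i hi => ?_
  calc lam i * y i = lam i / γ i * (γ i * y i) := by field_simp [(hγ i hi).ne']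
    _ ≤ s.sup' hs (fun i => lam i / γ i) * (γ i * y i) :=
      mul_le_mul_of_nonneg_right (le_sup' (fun i => lam i / γ i) hi)
        (mul_nonneg (hγ i hi).le (hy i hi))

theorem sum_mul_sq_le_of_sum_mul_sq_le {ι : Type*} [Fintype ι] [DecidableEq ι]
    {γ lam x δ : ι → ℝ} {r ε : ℝ} (Q : Finset ι) (hQc : Qᶜ.Nonempty)
    (hγ : ∀ i, 0 < γ i) (hlam : ∀ i, 0 ≤ lam i) (hx : ∀ j ∈ Q, x j ^ 2 ≤ δ j ^ 2 * r)
    (htrain : ∑ i, γ i * x i ^ 2 ≤ ε) :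
    ∑ i, lam i * x i ^ 2 ≤
      ε * Qᶜ.sup' hQc (fun k => lam k / γ k) + (∑ j ∈ Q, lam j * δ j ^ 2) * r := by
  set M := Qᶜ.sup' hQc (fun k => lam k / γ k)
  have hM : 0 ≤ M := by
    obtain ⟨k, hk⟩ := hQc
    exact (div_nonneg (hlam k) (hγ k).le).trans (le_sup' (fun k => lam k / γ k) hk)
  have hdecayed : ∑ j ∈ Q, lam j * x j ^ 2 ≤ (∑ j ∈ Q, lam j * δ j ^ 2) * r := by
    rw [sum_mul]
    refine sum_le_sum fun j hj => ?_
    rw [mul_assoc]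
    exact mul_le_mul_of_nonneg_left (hx j hj) (hlam j)
  have htop : ∑ k ∈ Qᶜ, lam k * x k ^ 2 ≤ ε * M := by
    have htrain_top : ∑ k ∈ Qᶜ, γ k * x k ^ 2 ≤ ε :=
      (sum_le_sum_of_subset_of_nonneg (subset_univ _)
        fun i _ _ => mul_nonneg (hγ i).le (sq_nonneg _)).trans htrain
    calc ∑ k ∈ Qᶜ, lam k * x k ^ 2 ≤ M * ∑ k ∈ Qᶜ, γ k * x k ^ 2 :=
          Qᶜ.sum_mul_le_sup'_div_mul_sum hQc (fun k _ => hγ k) fun k _ => sq_nonneg _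
      _ ≤ ε * M := by rw [mul_comm ε]; exact mul_le_mul_of_nonneg_left htrain_top hM
  rw [← sum_add_sum_compl Q]
  linarith

theorem sq_pow_mul_mul_exp_le (K : ℕ) {a δ g s : ℝ} (hg : 0 ≤ g) (hs : 0 ≤ s) :
    (a ^ K * δ * Real.exp (-2 * g * s)) ^ 2 ≤ δ ^ 2 * (|a| ^ 2) ^ K := by
  have hflow : Real.exp (-2 * g * s) ^ 2 ≤ 1 :=
    pow_le_one₀ (Real.exp_pos _).le (Real.exp_le_one_iff.mpr (by nlinarith))
  calc (a ^ K * δ * Real.exp (-2 * g * s)) ^ 2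
        = δ ^ 2 * (|a| ^ 2) ^ K * Real.exp (-2 * g * s) ^ 2 := by rw [sq_abs]; ring
    _ ≤ δ ^ 2 * (|a| ^ 2) ^ K * 1 := by gcongr
    _ = δ ^ 2 * (|a| ^ 2) ^ K := mul_one _

theorem annealed_gd_pop_loss_upper_general {d : ℕ}
    (γ lam δ0 : Fin d → ℝ) (γ1 : ℝ)
    (hγ : ∀ i, 0 < γ i) (hlam : ∀ i, 0 < lam i)
    (Q : Finset (Fin d))
    (hQ : Q.Nonempty)
    (hQc : Qᶜ.Nonempty) :
    ∃ C : ℝ, ∀ ε > (0:ℝ), ∀ K : ℕ, ∀ s ≥ (0:ℝ),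
      (∑ i, γ i * ((1 - 2 * (1/γ1) * γ i)^K * δ0 i * Real.exp (-2 * γ i * s))^2)
          = ε →
      (∑ i, lam i * ((1 - 2 * (1/γ1) * γ i)^K * δ0 i * Real.exp (-2 * γ i * s))^2)
        ≤ ε * Qᶜ.sup' hQc (fun k => lam k / γ k) +
          C * (Q.sup' hQ (fun j => |1 - 2 * γ j / γ1|^2))^K := by
  refine ⟨∑ j ∈ Q, lam j * δ0 j ^ 2, fun ε _ K s hs htrain => ?_⟩
  refine sum_mul_sq_le_of_sum_mul_sq_le Q hQc hγ (fun i => (hlam i).le) (fun j hj => ?_) htrain.le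
  have hrate : 1 - 2 * (1 / γ1) * γ j = 1 - 2 * γ j / γ1 := by ring
  calc _ ≤ δ0 j ^ 2 * (|1 - 2 * γ j / γ1| ^ 2) ^ K := by
        rw [hrate]; exact sq_pow_mul_mul_exp_le K (hγ j).le hs
    _ ≤ δ0 j ^ 2 * (Q.sup' hQ (fun j => |1 - 2 * γ j / γ1| ^ 2)) ^ K := by
        gcongr
        exact le_sup' (fun j => |1 - 2 * γ j / γ1| ^ 2) hj

/-- annealed gradient descent (K GD steps with η = 1/γ₁, then
gradient flow stopped at train loss ε) has population loss at most
ε · max_{k:γₖ=γ₁}(λₖ/γₖ) + C·c^K, where c = max_{j:γⱼ≠γ₁}|1-2γⱼ/γ₁|² < 1 and C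
depends only on λ and δ(0). -/
theorem annealed_gd_pop_loss_upper {d : ℕ} [NeZero d]
    (γ lam δ0 : Fin d → ℝ) (γ1 : ℝ)
    (hγ1 : γ1 = Finset.univ.sup' Finset.univ_nonempty γ)
    (hγ : ∀ i, 0 < γ i) (hlam : ∀ i, 0 < lam i)
    (Q : Finset (Fin d)) (hQdef : Q = Finset.univ.filter (fun i => γ i ≠ γ1))
    (hQ : Q.Nonempty)
    (hQc : Qᶜ.Nonempty) :
    ∃ C : ℝ, ∀ ε > (0:ℝ), ∀ K : ℕ, ∀ s ≥ (0:ℝ),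
      (∑ i, γ i * ((1 - 2 * (1/γ1) * γ i)^K * δ0 i * Real.exp (-2 * γ i * s))^2)
          = ε →
      (∑ i, lam i * ((1 - 2 * (1/γ1) * γ i)^K * δ0 i * Real.exp (-2 * γ i * s))^2)
        ≤ ε * Qᶜ.sup' hQc (fun k => lam k / γ k) +
          C * (Q.sup' hQ (fun j => |1 - 2 * γ j / γ1|^2))^K :=
  annealed_gd_pop_loss_upper_general γ lam δ0 γ1 hγ hlam Q hQ hQc
end

section
/- In the 2D example with γ₁ = 2/3, γ₂ = 1/3, λ₁ = λ₂ = 1/2, for any 0 < α < 1 and sufficiently large initialization magnitude M (depending on α and with 0 < ε < 1), gradient flow from 0 stopped at train loss ε achieves population loss at least (3/2)ε(1-α). -/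
/-!
With `u = exp (-2T/3)` the residuals of the two coordinates are `r₁ = M u²` and `r₂ = M u`.
A train loss below `1` forces `(M u)² < 3`, so `u² < 3 / M² ≤ α` once `M² ≥ 3 / α`; hence
`r₁² ≤ α r₂²`. Up to the factor `1 - α`, both losses are then carried by the slow coordinate,
whose ratio of population to train weight is `λ₂ / γ₂ = 3 / 2`.
-/

noncomputable section

-- Both losses are written in terms of the residuals `rᵢ = M - βᵢ`.
def trainLoss (r₁ r₂ : ℝ) : ℝ := (2 / 3) * r₁ ^ 2 + (1 / 3) * r₂ ^ 2

def popLoss (r₁ r₂ : ℝ) : ℝ := (1 / 2) * r₁ ^ 2 + (1 / 2) * r₂ ^ 2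

theorem popLoss_ge_of_sq_le {r₁ r₂ α : ℝ} (h : r₁ ^ 2 ≤ α * r₂ ^ 2) :
    (3 / 2) * trainLoss r₁ r₂ * (1 - α) ≤ popLoss r₁ r₂ := by
  have hαr₁ : 0 ≤ α * r₁ ^ 2 := by
    rcases le_or_gt 0 α with hα_nonneg | hα_neg
    · positivity
    · have hr₁ : r₁ ^ 2 ≤ 0 :=
        h.trans (mul_nonpos_of_nonpos_of_nonneg hα_neg.le (sq_nonneg r₂))
      rw [le_antisymm hr₁ (sq_nonneg r₁), mul_zero]
  unfold trainLoss popLoss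
  linarith

theorem sq_lt_of_mul_sq_lt {M u c α : ℝ} (hc : c ≤ α * M ^ 2) (h : (M * u) ^ 2 < c) :
    u ^ 2 < α := by
  by_contra! hu
  nlinarith [mul_le_mul_of_nonneg_right hu (sq_nonneg M)]

theorem gradient_flow_2d_lower_general (α : ℝ) (hα0 : 0 < α) :
    ∃ M0 : ℝ, 0 < M0 ∧ ∀ M ≥ M0, ∀ ε : ℝ, 0 < ε → ε < 1 → ∀ T ≥ (0:ℝ),
      (2/3) * (M * Real.exp (-4 * T / 3))^2 +
        (1/3) * (M * Real.exp (-2 * T / 3))^2 = ε →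
      (1/2) * (M * Real.exp (-4 * T / 3))^2 +
        (1/2) * (M * Real.exp (-2 * T / 3))^2 ≥ (3/2) * ε * (1 - α) := by
  refine ⟨√(3 / α), by positivity, fun M hM ε _ hε1 T _ htrain => ?_⟩
  have hexp : Real.exp (-4 * T / 3) = Real.exp (-2 * T / 3) ^ 2 := by
    rw [sq, ← Real.exp_add]
    ring_nf
  rw [hexp] at htrain ⊢
  set u := Real.exp (-2 * T / 3)
  have hMsq : 3 ≤ α * M ^ 2 := by
    have := (Real.sqrt_le_iff.mp hM).2
    rwa [div_le_iff₀' hα0] at this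
  have hslow : (M * u) ^ 2 < 3 := by linarith [sq_nonneg (M * u ^ 2)]
  have hdom : (M * u ^ 2) ^ 2 ≤ α * (M * u) ^ 2 := by
    have hu := sq_lt_of_mul_sq_lt hMsq hslow
    calc (M * u ^ 2) ^ 2 = u ^ 2 * (M * u) ^ 2 := by ring
      _ ≤ α * (M * u) ^ 2 := by gcongr
  rw [← htrain]
  exact popLoss_ge_of_sq_le hdom

/-- in the 2D example, for any 0 < α < 1 and sufficiently large M,
gradient flow from 0 stopped at train loss ε (0 < ε < 1) has population loss at
least (3/2)ε(1-α). -/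
theorem gradient_flow_2d_lower (α : ℝ) (hα0 : 0 < α) (hα1 : α < 1) :
    ∃ M0 : ℝ, 0 < M0 ∧ ∀ M ≥ M0, ∀ ε : ℝ, 0 < ε → ε < 1 → ∀ T ≥ (0:ℝ),
      (2/3) * (M * Real.exp (-4 * T / 3))^2 +
        (1/3) * (M * Real.exp (-2 * T / 3))^2 = ε →
      (1/2) * (M * Real.exp (-4 * T / 3))^2 +
        (1/2) * (M * Real.exp (-2 * T / 3))^2 ≥ (3/2) * ε * (1 - α) :=
  gradient_flow_2d_lower_general α hα0

end
end
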